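/- Let T be the maximal-label functional subgraph of the de Bruijn graph of span n (rooted at the maximum vertex m). If C is a directed cycle contained in T, then the length |C| divides n+1, and moreover for every vertex u on C, the word u·γ(u) equals l(C) repeated (n+1)/|C| times, where γ(u) is the label of the T-arc leaving u. -/

import Mathlib

/-! Write `c i = γ (v i)` for the labels along the cycle. Each vertex of a walk in `T` is the
word of the `n` labels preceding it, so `v (i + n) ++ [c (i + n)] = c i :: v (i + 1 + n)` is
allowed; rotating it shows that `c i` labels an allowed arc out of `v (i + n + 1)`, whence
`c i ≤ c (i + n + 1)` by maximality. A `p`-periodic sequence increasing along steps of `n + 1`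
is `(n + 1)`-periodic, so the labels, and with them the vertices, are `(n + 1)`-periodic.
Minimality of `p` gives `p ∣ n + 1`, and `u ++ [γ u]`, being `n + 1` consecutive labels, is
`(n + 1) / p` copies of one period. -/

open Function

section Periodic

variable {A : Type*}

theorem Function.Periodic.map_range'_add {f : ℕ → A} {p : ℕ} (hf : Periodic f p) (s k : ℕ) :
    (List.range' (s + p) k).map f = (List.range' s k).map f := by
  rw [add_comm, ← List.map_add_range', List.map_map]
  exact List.map_congr_left fun j _ => by simpa [add_comm] using hf j

theorem Function.Periodic.map_range'_mul_eq_flatten_replicate {f : ℕ → A} {p : ℕ}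
    (hf : Periodic f p) (s m : ℕ) :
    (List.range' s (m * p)).map f = (List.replicate m ((List.range' s p).map f)).flatten := by
  induction m with
  | zero => simp
  | succ m ih =>
    rw [add_mul, one_mul, add_comm, ← List.range'_append_1, List.map_append, hf.map_range'_add,
      ih, List.replicate_succ, List.flatten_cons]

theorem Function.Periodic.of_le_add [PartialOrder A] {f : ℕ → A} {p a : ℕ}
    (hf : Periodic f p) (hp : 0 < p) (hle : ∀ i, f i ≤ f (i + a)) : Periodic f a := by
  intro i
  have hmono : Monotone fun k => f (i + k * a) := monotone_nat_of_le_succ fun k => by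
    simpa only [add_mul, one_mul, add_assoc] using hle (i + k * a)
  refine le_antisymm ?_ (hle i)
  calc f (i + a) = f (i + 1 * a) := by rw [one_mul]
    _ ≤ f (i + p * a) := hmono hp
    _ = f i := by rw [mul_comm]; exact hf.nat_mul a i

theorem Function.Periodic.dvd_of_injOn {f : ℕ → A} {p q : ℕ} (hfp : Periodic f p)
    (hp : 0 < p) (hinj : Set.InjOn f (Set.Iio p)) (hfq : Periodic f q) : p ∣ q :=
  Nat.dvd_of_mod_eq_zero <| hinj (Nat.mod_lt q hp) hp <| by rw [hfp.map_mod_nat, hfq.eq]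

end Periodic

section ShiftSequence

variable {A : Type*} {c : ℕ → A} {v : ℕ → List A}

theorem eq_drop_append_of_shift (hv : ∀ i, v (i + 1) = (v i).tail ++ [c i]) (i : ℕ) {k : ℕ}
    (hk : k ≤ (v i).length) :
    v (i + k) = (v i).drop k ++ (List.range' i k).map c := by
  induction k with
  | zero => simp
  | succ k ih =>
    have hne : (v i).drop k ≠ [] := by simp only [ne_eq, List.drop_eq_nil_iff]; omega
    rw [← add_assoc, hv, ih (by omega), List.tail_append_of_ne_nil hne, List.tail_drop,
      List.range'_1_concat, List.map_append, List.map_singleton, List.append_assoc]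

theorem eq_map_range'_of_shift (hv : ∀ i, v (i + 1) = (v i).tail ++ [c i]) {n i : ℕ}
    (hlen : (v i).length = n) :
    v (i + n) = (List.range' i n).map c := by
  rw [eq_drop_append_of_shift hv i hlen.ge, List.drop_eq_nil_of_le hlen.le, List.nil_append]

theorem Function.Periodic.of_shift_of_periodic_labels {n p q : ℕ} (hvp : Periodic v p)
    (hp : 0 < p) (hv : ∀ i, v (i + 1) = (v i).tail ++ [c i]) (hlen : ∀ i, (v i).length = n)
    (hcq : Periodic c q) : Periodic v q := by
  obtain ⟨p, rfl⟩ : ∃ p', p = p' + 1 := ⟨p - 1, by omega⟩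
  -- `v j` recurs at `j + n * p + n`, which is preceded by a window of `n` labels
  have hwindow : ∀ j, v j = (List.range' (j + n * p) n).map c := fun j => by
    rw [← eq_map_range'_of_shift hv (hlen _), ← hvp.nat_mul n j, Nat.cast_id]
    ring_nf
  intro i
  rw [hwindow, hwindow, add_right_comm, hcq.map_range'_add]

theorem append_eq_map_range'_of_shift {n : ℕ} (hv : ∀ i, v (i + 1) = (v i).tail ++ [c i])
    (hlen : ∀ i, (v i).length = n) (hc : Periodic c (n + 1)) (hvn : Periodic v (n + 1))
    (i : ℕ) : v i ++ [c i] = (List.range' (i + 1) (n + 1)).map c := by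
  have hi : i + 1 + n = i + (n + 1) := by omega
  rw [List.range'_1_concat, List.map_append, ← eq_map_range'_of_shift hv (hlen _), hi, hvn,
    List.map_singleton, hc]

end ShiftSequence

theorem label_le_label_add_succ {A : Type*} [LE A] {n : ℕ} {L : Set (List A)}
    {γ : List A → A} {v : ℕ → List A} (hlen : ∀ i, (v i).length = n)
    (hrot : ∀ (a : A) (w : List A), (a :: w) ∈ L → (w ++ [a]) ∈ L)
    (hmax : ∀ i, ∀ b : A, (v i) ++ [b] ∈ L → b ≤ γ (v i))
    (hstep : ∀ i, (v i) ++ [γ (v i)] ∈ L ∧ v (i + 1) = (v i).tail ++ [γ (v i)]) (i : ℕ) :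
    γ (v i) ≤ γ (v (i + (n + 1))) := by
  have hshift : ∀ i, v (i + 1) = (v i).tail ++ [(fun j => γ (v j)) i] := fun i => (hstep i).2
  have hword : v (i + n) ++ [γ (v (i + n))] = γ (v i) :: v (i + 1 + n) :=
    calc v (i + n) ++ [γ (v (i + n))] = (List.range' i (n + 1)).map fun j => γ (v j) := by
          rw [List.range'_1_concat, List.map_append, ← eq_map_range'_of_shift hshift (hlen i)]
          rfl
      _ = γ (v i) :: v (i + 1 + n) := by
          rw [List.range'_succ, List.map_cons, eq_map_range'_of_shift hshift (hlen (i + 1))]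
  have hmem := hrot _ _ (hword ▸ (hstep (i + n)).1)
  rw [add_assoc, add_comm 1 n] at hmem
  exact hmax _ _ hmem

/-- Cycles of the maximal-label functional subgraph `T` of the de Bruijn graph of span `n`.
Let `C` be a directed cycle in `T`, given by the periodic vertex sequence `v` with exact
period `p = |C|` (the vertices of one period are pairwise distinct), where the arc leaving
each vertex `u` is the outgoing arc of maximal label `γ u`. Then `|C|` divides `n + 1`,
and for every vertex `u = v i` of the cycle, the word `u ++ [γ u]` equals the label of `C`
(read around the cycle starting after `u`) repeated `(n+1)/|C|` times. -/
theorem cycle_in_T_divides {A : Type*} [LinearOrder A] (n p : ℕ)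
    (L : Set (List A)) (γ : List A → A) (v : ℕ → List A)
    (hlen : ∀ i, (v i).length = n)
    (hrot : ∀ (a : A) (w' : List A), (a :: w') ∈ L → (w' ++ [a]) ∈ L)
    (hmax : ∀ i, ∀ b : A, (v i) ++ [b] ∈ L → b ≤ γ (v i))
    (hstep : ∀ i, (v i) ++ [γ (v i)] ∈ L ∧ v (i + 1) = (v i).tail ++ [γ (v i)])
    (hp : 0 < p)
    (hper : ∀ i, v (i + p) = v i)
    (hinj : ∀ i j, i < p → j < p → v i = v j → i = j) :
    p ∣ (n + 1) ∧
    ∀ i, v i ++ [γ (v i)] =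
      (List.replicate ((n + 1) / p)
        ((List.range p).map fun j => γ (v (i + 1 + j)))).flatten := by
  set c : ℕ → A := fun i => γ (v i)
  have hshift : ∀ i, v (i + 1) = (v i).tail ++ [c i] := fun i => (hstep i).2
  have hvp : Periodic v p := hper
  have hcp : Periodic c p := hvp.comp γ
  have hcn : Periodic c (n + 1) := hcp.of_le_add hp (label_le_label_add_succ hlen hrot hmax hstep)
  have hvn : Periodic v (n + 1) := hvp.of_shift_of_periodic_labels hp hshift hlen hcn
  have hdvd : p ∣ n + 1 := hvp.dvd_of_injOn hp (fun i hi j hj => hinj i j hi hj) hvn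
  refine ⟨hdvd, fun i => ?_⟩
  have hrep := hcp.map_range'_mul_eq_flatten_replicate (i + 1) ((n + 1) / p)
  rw [Nat.div_mul_cancel hdvd] at hrep
  rw [append_eq_map_range'_of_shift hshift hlen hcn hvn, hrep, List.range'_eq_map_range,
    List.map_map]
  rfl
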